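/- Fix n ∈ {1,…,N}. Regard S_0(x) as a function of the n-th site point x_n (all other sites, all matrices D_k, the evaluation point x, and ε_s ≥ 0 being fixed). If x ≠ x_n, then this function is differentiable at x_n and its gradient equals S_0(x)·S_n(x)·Y_n(x), where Y_n(x) = A_n(x_n − x)/d_n(x, x_n). -/

import Mathlib

/-!
Only the `n`-th summand of the denominator depends on `x_n`. Since `A_n = D_n D_nᵀ`, the distance
`d_n(x, x_n) = √(v ⬝ᵥ v)` with `v = D_nᵀ (x - x_n)`, and `v ≠ 0` because `D_n` is invertible and
`x ≠ x_n`; so `d_n` is differentiable in `x_n` with gradient `Y_n = A_n (x_n - x) / d_n`. The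
chain rule through `exp` and `t ↦ ε / t` (the denominator `G` is positive as `ε ≥ 0`) gives
`-(ε / G²) · (-e^{-d_n} Y_n) = S_0 S_n Y_n`.
-/

open Matrix

/-- The anisotropic (Mahalanobis-type) length `sqrt(uᵀ A u)`. -/
noncomputable def mdist {d : ℕ} (A : Matrix (Fin d) (Fin d) ℝ) (u : Fin d → ℝ) : ℝ :=
  Real.sqrt (u ⬝ᵥ A.mulVec u)

/-- The denominator `ε_s + ∑_{k=1}^N exp(−d_k(x, x_k))` with `A_k = D_k D_kᵀ`. -/
noncomputable def Sden {d N : ℕ} (p : Fin N → Fin d → ℝ)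
    (D : Fin N → Matrix (Fin d) (Fin d) ℝ) (ε : ℝ) (x : Fin d → ℝ) : ℝ :=
  ε + ∑ k, Real.exp (-(mdist (D k * (D k)ᵀ) (x - p k)))

/-- `S_m(x) = exp(−d_m(x, x_m)) / (ε_s + ∑_k exp(−d_k(x, x_k)))` for `m = 1,…,N`. -/
noncomputable def S {d N : ℕ} (p : Fin N → Fin d → ℝ)
    (D : Fin N → Matrix (Fin d) (Fin d) ℝ) (ε : ℝ) (x : Fin d → ℝ) (m : Fin N) : ℝ :=
  Real.exp (-(mdist (D m * (D m)ᵀ) (x - p m))) / Sden p D ε x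

/-- `S_0(x) = ε_s / (ε_s + ∑_k exp(−d_k(x, x_k)))`. -/
noncomputable def S0 {d N : ℕ} (p : Fin N → Fin d → ℝ)
    (D : Fin N → Matrix (Fin d) (Fin d) ℝ) (ε : ℝ) (x : Fin d → ℝ) : ℝ :=
  ε / Sden p D ε x

noncomputable def dotProductCLM {ι : Type*} [Fintype ι] (v : ι → ℝ) : (ι → ℝ) →L[ℝ] ℝ :=
  LinearMap.toContinuousLinearMap (dotProductBilin ℝ ℝ v)

@[simp]
theorem dotProductCLM_apply {ι : Type*} [Fintype ι] (v w : ι → ℝ) :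
    dotProductCLM v w = v ⬝ᵥ w :=
  rfl

theorem hasFDerivAt_dotProduct_self {ι : Type*} [Fintype ι] (v : ι → ℝ) :
    HasFDerivAt (fun u : ι → ℝ => u ⬝ᵥ u) (2 • dotProductCLM v) v := by
  have hv i := hasFDerivAt_apply (𝕜 := ℝ) (F' := fun _ : ι => ℝ) i v
  have h := HasFDerivAt.fun_sum (u := Finset.univ) (A := fun i (u : ι → ℝ) => u i * u i)
    fun i _ => (hv i).fun_mul (hv i)
  refine h.congr_fderiv ?_
  ext w
  simp [dotProduct, Finset.mul_sum, two_mul]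

theorem mulVec_transpose_dotProduct_mulVec_transpose {ι : Type*} [Fintype ι]
    (D : Matrix ι ι ℝ) (u w : ι → ℝ) :
    Dᵀ *ᵥ u ⬝ᵥ Dᵀ *ᵥ w = (D * Dᵀ) *ᵥ u ⬝ᵥ w := by
  rw [dotProduct_mulVec, vecMul_transpose, mulVec_mulVec]

theorem mdist_mul_transpose_self {d : ℕ} (D : Matrix (Fin d) (Fin d) ℝ) (u : Fin d → ℝ) :
    mdist (D * Dᵀ) u = √(Dᵀ *ᵥ u ⬝ᵥ Dᵀ *ᵥ u) := by
  rw [mdist, mulVec_transpose_dotProduct_mulVec_transpose, dotProduct_comm]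

theorem hasFDerivAt_mdist_mul_transpose_self {d : ℕ} {D : Matrix (Fin d) (Fin d) ℝ} (hD : IsUnit D)
    {u : Fin d → ℝ} (hu : u ≠ 0) :
    HasFDerivAt (mdist (D * Dᵀ))
      ((mdist (D * Dᵀ) u)⁻¹ • dotProductCLM ((D * Dᵀ) *ᵥ u)) u := by
  have hv : Dᵀ *ᵥ u ≠ 0 := fun h => hu <|
    mulVec_injective_iff_isUnit.2 ((isUnit_transpose D).2 hD) (h.trans (mulVec_zero _).symm)
  have hlin : HasFDerivAt (fun u => Dᵀ *ᵥ u) (LinearMap.toContinuousLinearMap (mulVecLin Dᵀ)) u :=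
    (LinearMap.toContinuousLinearMap (mulVecLin Dᵀ)).hasFDerivAt
  have h := ((hasFDerivAt_dotProduct_self (Dᵀ *ᵥ u)).comp u hlin).sqrt
    (mt dotProduct_self_eq_zero.1 hv)
  rw [show mdist (D * Dᵀ) = _ from funext (mdist_mul_transpose_self D)]
  refine h.congr_fderiv ?_
  ext w
  simp only [_root_.smul_apply, ContinuousLinearMap.comp_apply, dotProductCLM_apply,
    LinearMap.coe_toContinuousLinearMap', mulVecLin_apply, Function.comp_apply, smul_eq_mul,
    nsmul_eq_mul, mulVec_transpose_dotProduct_mulVec_transpose]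
  ring

theorem hasFDerivAt_exp_neg_mdist_sub {d : ℕ} {D : Matrix (Fin d) (Fin d) ℝ} (hD : IsUnit D)
    {x q : Fin d → ℝ} (hx : x ≠ q) :
    HasFDerivAt (fun q => Real.exp (-mdist (D * Dᵀ) (x - q)))
      ((Real.exp (-mdist (D * Dᵀ) (x - q)) * (mdist (D * Dᵀ) (x - q))⁻¹) •
        dotProductCLM ((D * Dᵀ) *ᵥ (x - q))) q := by
  have h := ((hasFDerivAt_mdist_mul_transpose_self hD (sub_ne_zero.2 hx)).comp q
    ((hasFDerivAt_id q).const_sub x)).neg.exp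
  refine h.congr_fderiv ?_
  ext w
  simp only [Pi.neg_apply, Function.comp_apply, ContinuousLinearMap.comp_neg,
    ContinuousLinearMap.comp_id, neg_neg, _root_.smul_apply, dotProductCLM_apply, smul_eq_mul]
  ring

theorem Sden_update {d N : ℕ} (p : Fin N → Fin d → ℝ) (D : Fin N → Matrix (Fin d) (Fin d) ℝ)
    (ε : ℝ) (x : Fin d → ℝ) (n : Fin N) (q : Fin d → ℝ) :
    Sden (Function.update p n q) D ε x =
      Sden p D ε x - Real.exp (-mdist (D n * (D n)ᵀ) (x - p n)) +
        Real.exp (-mdist (D n * (D n)ᵀ) (x - q)) := by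
  have hn := Finset.mem_univ n
  rw [Sden, Sden, Finset.sum_congr rfl fun k _ =>
      Function.apply_update (fun k y => Real.exp (-mdist (D k * (D k)ᵀ) (x - y))) p n q k,
    Finset.sum_update_of_mem hn, Finset.sdiff_singleton_eq_erase, ← Finset.add_sum_erase _ _ hn]
  ring

theorem Sden_pos {d N : ℕ} [Nonempty (Fin N)] (p : Fin N → Fin d → ℝ)
    (D : Fin N → Matrix (Fin d) (Fin d) ℝ) {ε : ℝ} (hε : 0 ≤ ε) (x : Fin d → ℝ) :
    0 < Sden p D ε x :=
  add_pos_of_nonneg_of_pos hε (Finset.sum_pos (fun _ _ => Real.exp_pos _) Finset.univ_nonempty)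

theorem hasFDerivAt_Sden_update {d N : ℕ} (p : Fin N → Fin d → ℝ)
    {D : Fin N → Matrix (Fin d) (Fin d) ℝ} {n : Fin N} (hD : IsUnit (D n)) (ε : ℝ)
    {x : Fin d → ℝ} (hx : x ≠ p n) :
    HasFDerivAt (fun q => Sden (Function.update p n q) D ε x)
      ((Real.exp (-mdist (D n * (D n)ᵀ) (x - p n)) * (mdist (D n * (D n)ᵀ) (x - p n))⁻¹) •
        dotProductCLM ((D n * (D n)ᵀ) *ᵥ (x - p n))) (p n) := by
  simp only [Sden_update]
  exact (hasFDerivAt_exp_neg_mdist_sub hD hx).const_add _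

/-- Regarding `S_0(x)` as a function of the `n`-th site point `x_n` (all other data fixed),
if `x ≠ x_n` then it is differentiable at `x_n` with gradient
`S_0(x)·S_n(x)·Y_n(x)` where `Y_n(x) = A_n(x_n − x)/d_n(x, x_n)`
(the gradient being expressed through the Fréchet derivative `w ↦ ⟨grad, w⟩`). -/
theorem S0_differentiableAt_site {d N : ℕ} (p : Fin N → Fin d → ℝ)
    (D : Fin N → Matrix (Fin d) (Fin d) ℝ) (hD : ∀ k, IsUnit (D k))
    (ε : ℝ) (hε : 0 ≤ ε) (x : Fin d → ℝ) (n : Fin N) (hx : x ≠ p n) :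
    DifferentiableAt ℝ (fun q => S0 (Function.update p n q) D ε x) (p n) ∧
      ∀ w : Fin d → ℝ,
        fderiv ℝ (fun q => S0 (Function.update p n q) D ε x) (p n) w =
          S0 p D ε x * S p D ε x n *
            (((mdist (D n * (D n)ᵀ) (x - p n))⁻¹ •
              (D n * (D n)ᵀ).mulVec (p n - x)) ⬝ᵥ w) := by
  have : Nonempty (Fin N) := ⟨n⟩
  have hden := hasFDerivAt_Sden_update p (hD n) ε hx
  have hS0 : HasFDerivAt (fun q => S0 (Function.update p n q) D ε x) _ (p n) :=
    ((hasDerivAt_inv (Sden_pos p D hε x).ne').comp_hasFDerivAt_of_eq (p n) hden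
      (by rw [Function.update_eq_self])).const_mul ε
  refine ⟨hS0.differentiableAt, fun w => ?_⟩
  rw [hS0.fderiv, ← neg_sub x (p n)]
  simp only [_root_.smul_apply, dotProductCLM_apply, smul_eq_mul, smul_dotProduct, mulVec_neg,
    neg_dotProduct, S0, S]
  ring
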